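/- On the 6-dimensional solvable Lie algebra with de¹ = de² = 0, de³ = e¹∧e³ − e²∧e⁴, de⁴ = e¹∧e⁴ + e²∧e³, de⁵ = −e¹∧e⁵ + e²∧e⁶, de⁶ = −e¹∧e⁶ − e²∧e⁵, the 2-form F = e¹∧e² + e³∧e⁴ + e⁵∧e⁶ satisfies dF = 2(e¹∧e³∧e⁴ − e¹∧e⁵∧e⁶) and dF∧F = 0; hence d(F²) = 0 (balanced) while dF ≠ 0. -/
import Mathlib
set_option maxHeartbeats 1600000


/-- The generators `e¹, …, e⁶` (0-indexed) of the exterior algebra of the dual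
of a 6-dimensional Lie algebra. -/
noncomputable def E : Fin 6 → ExteriorAlgebra ℝ (Fin 6 → ℝ) :=
  fun i => ExteriorAlgebra.ι ℝ (Pi.single i 1)

lemma Esq (i : Fin 6) : E i * E i = 0 := ExteriorAlgebra.ι_sq_zero _

lemma Ecomm (i j : Fin 6) : E i * E j = -(E j * E i) := by
  have := ExteriorAlgebra.ι_add_mul_swap (R := ℝ) (M := Fin 6 → ℝ)
    (Pi.single i 1) (Pi.single j 1)
  unfold E; linear_combination (norm := module) this

lemma Eswap (i j : Fin 6) (x : ExteriorAlgebra ℝ (Fin 6 → ℝ)) :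
    E i * (E j * x) = -(E j * (E i * x)) := by
  rw [← mul_assoc, Ecomm, neg_mul, mul_assoc]

lemma Ezero (i : Fin 6) (x : ExteriorAlgebra ℝ (Fin 6 → ℝ)) : E i * (E i * x) = 0 := by
  rw [← mul_assoc, Esq, zero_mul]

noncomputable def f3 : (Fin 6 → ℝ) [⋀^Fin 3]→ₗ[ℝ] ℝ :=
  (Matrix.detRowAlternating : (Fin 3 → ℝ) [⋀^Fin 3]→ₗ[ℝ] ℝ).compLinearMap
    (LinearMap.funLeft ℝ ℝ ![0, 2, 3])

noncomputable def gfam : ∀ i : ℕ, (Fin 6 → ℝ) [⋀^Fin i]→ₗ[ℝ] ℝ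
  | 3 => f3
  | _ => 0

noncomputable def phi : ExteriorAlgebra ℝ (Fin 6 → ℝ) →ₗ[ℝ] ℝ :=
  ExteriorAlgebra.liftAlternating gfam

lemma triple (i j k : Fin 6) :
    E i * E j * E k
      = ExteriorAlgebra.ιMulti ℝ 3 ![Pi.single i 1, Pi.single j 1, Pi.single k 1] := by
  simp [E, ExteriorAlgebra.ιMulti_apply, List.ofFn_succ, mul_assoc]

lemma phi_triple (i j k : Fin 6) :
    phi (E i * E j * E k)
      = Matrix.det (Matrix.of fun a b =>
          ((![Pi.single i 1, Pi.single j 1, Pi.single k 1] : Fin 3 → Fin 6 → ℝ) a) (![0, 2, 3] b)) := by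
  rw [triple, phi, ExteriorAlgebra.liftAlternating_apply_ιMulti]
  rfl

lemma phiA : phi (E 0 * E 2 * E 3) = 1 := by
  rw [phi_triple]
  simp [Matrix.det_fin_three, Pi.single_apply]

lemma phiB : phi (E 0 * E 4 * E 5) = 0 := by
  rw [phi_triple]
  simp [Matrix.det_fin_three, Pi.single_apply]


/-- On the 6-dimensional solvable Lie algebra with `de¹ = de² = 0`,
`de³ = e¹∧e³ − e²∧e⁴`, `de⁴ = e¹∧e⁴ + e²∧e³`, `de⁵ = −e¹∧e⁵ + e²∧e⁶`,
`de⁶ = −e¹∧e⁶ − e²∧e⁵`, the form `F = e¹∧e² + e³∧e⁴ + e⁵∧e⁶` satisfies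
`dF = 2(e¹∧e³∧e⁴ − e¹∧e⁵∧e⁶)` and `dF∧F = 0`; hence `d(F²) = 0` (balanced)
while `dF ≠ 0`. -/
theorem solvable_complex_parallelizable_II_balanced
    (d : ExteriorAlgebra ℝ (Fin 6 → ℝ) →ₗ[ℝ] ExteriorAlgebra ℝ (Fin 6 → ℝ))
    (hd1 : d 1 = 0)
    (hLeib : ∀ (v : Fin 6 → ℝ) (x : ExteriorAlgebra ℝ (Fin 6 → ℝ)),
      d (ExteriorAlgebra.ι ℝ v * x)
        = d (ExteriorAlgebra.ι ℝ v) * x - ExteriorAlgebra.ι ℝ v * d x)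
    (h1 : d (E 0) = 0) (h2 : d (E 1) = 0)
    (h3 : d (E 2) = E 0 * E 2 - E 1 * E 3)
    (h4 : d (E 3) = E 0 * E 3 + E 1 * E 2)
    (h5 : d (E 4) = -(E 0 * E 4) + E 1 * E 5)
    (h6 : d (E 5) = -(E 0 * E 5) - E 1 * E 4) :
    d (E 0 * E 1 + E 2 * E 3 + E 4 * E 5)
      = (2 : ℝ) • (E 0 * E 2 * E 3 - E 0 * E 4 * E 5) ∧
    d (E 0 * E 1 + E 2 * E 3 + E 4 * E 5) * (E 0 * E 1 + E 2 * E 3 + E 4 * E 5) = 0 ∧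
    d ((E 0 * E 1 + E 2 * E 3 + E 4 * E 5) * (E 0 * E 1 + E 2 * E 3 + E 4 * E 5)) = 0 ∧
    d (E 0 * E 1 + E 2 * E 3 + E 4 * E 5) ≠ 0 := by
  have leib : ∀ (i : Fin 6) (x : ExteriorAlgebra ℝ (Fin 6 → ℝ)),
      d (E i * x) = d (E i) * x - E i * d x := fun i x => hLeib _ x
  set F := E 0 * E 1 + E 2 * E 3 + E 4 * E 5 with hF
  -- first claim
  have c1 : d F = (2 : ℝ) • (E 0 * E 2 * E 3 - E 0 * E 4 * E 5) := by
    rw [hF, map_add, map_add, leib 0, leib 2, leib 4, h1, h2, h3, h4, h5, h6]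
    simp only [mul_one, mul_zero, sub_zero, zero_mul, zero_sub, mul_neg, neg_neg,
      sub_mul, add_mul, neg_mul, mul_add, mul_sub, mul_assoc,
      Eswap 2 0, Eswap 2 1, Eswap 3 0, Eswap 3 1, Eswap 4 0, Eswap 4 1,
      Eswap 5 0, Eswap 5 1, Ezero, Esq, smul_sub, two_smul ℝ]
    abel
  have c2 : d F * F = 0 := by
    rw [c1, hF]
    simp only [smul_mul_assoc, sub_mul, mul_add, add_mul, mul_assoc,
      Eswap 1 0, Eswap 2 0, Eswap 2 1, Eswap 3 0, Eswap 3 1, Eswap 3 2, Eswap 4 0, Eswap 4 1, Eswap 4 2, Eswap 4 3, Eswap 5 0, Eswap 5 1, Eswap 5 2, Eswap 5 3, Eswap 5 4, Ecomm 1 0, Ecomm 2 0, Ecomm 2 1, Ecomm 3 0, Ecomm 3 1, Ecomm 3 2, Ecomm 4 0, Ecomm 4 1, Ecomm 4 2, Ecomm 4 3, Ecomm 5 0, Ecomm 5 1, Ecomm 5 2, Ecomm 5 3, Ecomm 5 4, Ezero, Esq, mul_zero, zero_mul, neg_neg, mul_neg, neg_mul,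
      neg_zero, add_zero, zero_add, sub_self, smul_zero, sub_zero, zero_sub, neg_add_rev]
    abel_nf
    module
  have c2' : F * d F = 0 := by
    rw [c1, hF]
    simp only [mul_smul_comm, sub_mul, mul_sub, mul_add, add_mul, mul_assoc,
      Eswap 1 0, Eswap 2 0, Eswap 2 1, Eswap 3 0, Eswap 3 1, Eswap 3 2, Eswap 4 0, Eswap 4 1, Eswap 4 2, Eswap 4 3, Eswap 5 0, Eswap 5 1, Eswap 5 2, Eswap 5 3, Eswap 5 4, Ecomm 1 0, Ecomm 2 0, Ecomm 2 1, Ecomm 3 0, Ecomm 3 1, Ecomm 3 2, Ecomm 4 0, Ecomm 4 1, Ecomm 4 2, Ecomm 4 3, Ecomm 5 0, Ecomm 5 1, Ecomm 5 2, Ecomm 5 3, Ecomm 5 4, Ezero, Esq, mul_zero, zero_mul, neg_neg, mul_neg, neg_mul,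
      neg_zero, add_zero, zero_add, sub_self, smul_zero, sub_zero, zero_sub, neg_add_rev]
  have leib2 : ∀ (i j : Fin 6) (x : ExteriorAlgebra ℝ (Fin 6 → ℝ)),
      d (E i * E j * x) = d (E i * E j) * x + (E i * E j) * d x := by
    intro i j x
    rw [mul_assoc, leib i, leib j, leib i (E j)]
    noncomm_ring
  have c3 : d (F * F) = 0 := by
    have hFF : F * F = E 0 * E 1 * F + E 2 * E 3 * F + E 4 * E 5 * F := by
      rw [hF]; noncomm_ring
    rw [hFF, map_add, map_add, leib2, leib2, leib2]
    have : d (E 0 * E 1) * F + E 0 * E 1 * d F + (d (E 2 * E 3) * F + E 2 * E 3 * d F)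
        + (d (E 4 * E 5) * F + E 4 * E 5 * d F) = d F * F + F * d F := by
      rw [hF, map_add, map_add]; noncomm_ring
    rw [this, c2, c2', add_zero]
  refine ⟨c1, c2, c3, ?_⟩
  rw [c1]
  intro h0
  have h := congrArg phi h0
  rw [map_smul, map_sub, phiA, phiB, map_zero] at h
  norm_num at h
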